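/- arXiv:1001.3971 — 3 statements merged into one kernel-verified Lean document; each statement's English description precedes it below -/
import Mathlib

section
/- Multi-parameter Braunstein–Caves inequality: Let ρ be a density matrix on ℂ^d, let D_1,…,D_p be Hermitian d×d complex matrices (playing the role of the partial derivatives ∂ρ/∂θ^j), and let λ^1,…,λ^p be Hermitian d×d complex matrices satisfying D_j = (1/2)(ρ λ^j + λ^j ρ) for every j (symmetric logarithmic derivatives). Let (M_m)_{m∈Ω} be a POVM with finite outcome set Ω. Define the Fisher information matrix F ∈ ℝ^{p×p} by F_{jk} = Σ over m ∈ Ω with tr(ρ M_m) ≠ 0 of Re tr(D_j M_m) · Re tr(D_k M_m) / Re tr(ρ M_m), and the SLD quantum information matrix H ∈ ℝ^{p×p} by H_{jk} = Re tr(λ^j ρ λ^k). Then H − F is positive semidefinite; equivalently, for every x ∈ ℝ^p, Σ_{j,k} x_j x_k F_{jk} ≤ Σ_{j,k} x_j x_k H_{jk}. -/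
/-!
For `x : ℝ^p` put `L = ∑ j, x j • λʲ`, so that `xᵀ H x = Re tr(L ρ L)` and, by the SLD equations,
`∑ j, x j * Re tr(Dⱼ Mₘ) = Re tr(Mₘ L ρ)`. Cauchy–Schwarz for the semi-inner product
`⟪X, Y⟫ = tr(Y ρ Xᴴ)`, applied to `X = N`, `Y = N L` with `Mₘ = Nᴴ N`, gives
`|tr(Mₘ L ρ)|² ≤ tr(ρ Mₘ) · tr(Mₘ L ρ L)`, i.e. each classical Fisher term is at most
`Re tr(Mₘ L ρ L)`. Summing over `m` and using `∑ m, Mₘ = 1` yields `xᵀ F x ≤ xᵀ H x`.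
-/

open scoped BigOperators ComplexOrder

noncomputable section

/-- The Hermitian inner product on `Fin d → ℂ`, conjugate-linear in the first argument. -/
def inn {d : ℕ} (x y : Fin d → ℂ) : ℂ := ∑ i, (starRingEnd ℂ) (x i) * y i

open scoped MatrixOrder

lemma Finset.sum_sum_mul_mul_sum_ite_div {ι Ω : Type*} [Fintype ι] [Fintype Ω] (x : ι → ℝ)
    (a : ι → Ω → ℝ) (b : Ω → ℝ) (c : Ω → Prop) [DecidablePred c] :
    ∑ j, ∑ k, x j * x k * ∑ m, (if c m then a j m * a k m / b m else 0)
      = ∑ m, if c m then (∑ j, x j * a j m) ^ 2 / b m else 0 := by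
  simp only [Finset.mul_sum]
  rw [(Finset.sum_congr rfl fun j _ => Finset.sum_comm).trans Finset.sum_comm]
  refine Finset.sum_congr rfl fun m _ => ?_
  split_ifs
  · simp only [sq, Finset.sum_mul_sum, Finset.sum_div]
    exact Finset.sum_congr rfl fun j _ => Finset.sum_congr rfl fun k _ => by ring
  · simp

namespace Matrix

lemma isHermitian_sum_smul {n 𝕜 ι : Type*} [RCLike 𝕜] [Fintype ι] {x : ι → ℝ}
    {C : ι → Matrix n n 𝕜} (hC : ∀ j, (C j).IsHermitian) : (∑ j, x j • C j).IsHermitian := by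
  simp [IsHermitian, conjTranspose_sum, conjTranspose_smul, fun j => (hC j).eq]

variable {n 𝕜 : Type*} [Fintype n] [RCLike 𝕜]

lemma PosSemidef.trace_mul_nonneg {A B : Matrix n n 𝕜} (hA : A.PosSemidef) (hB : B.PosSemidef) :
    0 ≤ (A * B).trace := by
  classical
  obtain ⟨N, rfl⟩ := CStarAlgebra.nonneg_iff_eq_star_mul_self.mp hA.nonneg
  rw [star_eq_conjTranspose, Matrix.mul_assoc, trace_mul_comm]
  exact (hB.mul_mul_conjTranspose_same N).trace_nonneg

lemma PosSemidef.norm_trace_mul_mul_sq_le {M ρ : Matrix n n 𝕜} (hM : M.PosSemidef)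
    (hρ : ρ.PosSemidef) (L : Matrix n n 𝕜) :
    ‖(M * L * ρ).trace‖ ^ 2 ≤ RCLike.re (M * ρ).trace * RCLike.re (M * L * ρ * Lᴴ).trace := by
  classical
  obtain ⟨N, rfl⟩ := CStarAlgebra.nonneg_iff_eq_star_mul_self.mp hM.nonneg
  let := ρ.toMatrixSeminormedAddCommGroup hρ
  let := ρ.toMatrixInnerProductSpace hρ
  have hinner : ∀ X Y : Matrix n n 𝕜, inner 𝕜 X Y = (Y * ρ * Xᴴ).trace := fun _ _ => rfl
  have hCS := inner_mul_inner_self_le (𝕜 := 𝕜) N (N * L)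
  rw [norm_inner_symm (N * L) N, ← sq, hinner, hinner, hinner] at hCS
  simpa only [conjTranspose_mul, ← Matrix.mul_assoc, trace_mul_comm _ Nᴴ, star_eq_conjTranspose]
    using hCS

lemma IsHermitian.re_trace_mul_mul_rev {A B C : Matrix n n 𝕜} (hA : A.IsHermitian)
    (hB : B.IsHermitian) (hC : C.IsHermitian) :
    RCLike.re (A * B * C).trace = RCLike.re (C * B * A).trace := by
  rw [← RCLike.conj_re, starRingEnd_apply, ← trace_conjTranspose]
  simp [conjTranspose_mul, hA.eq, hB.eq, hC.eq, Matrix.mul_assoc]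

lemma IsHermitian.re_trace_half_smul_add_mul {ρ L M : Matrix n n 𝕜} (hρ : ρ.IsHermitian)
    (hL : L.IsHermitian) (hM : M.IsHermitian) :
    RCLike.re (((1 / 2 : 𝕜) • (ρ * L + L * ρ)) * M).trace = RCLike.re (M * L * ρ).trace := by
  have hcyc : (L * ρ * M).trace = (M * L * ρ).trace := by
    rw [trace_mul_comm, Matrix.mul_assoc]
  rw [Matrix.smul_mul, trace_smul, Matrix.add_mul, trace_add, hcyc, smul_eq_mul,
    show (1 / 2 : 𝕜) = ((1 / 2 : ℝ) : 𝕜) by push_cast; rfl, RCLike.re_ofReal_mul, map_add,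
    hρ.re_trace_mul_mul_rev hL hM]
  ring

lemma PosSemidef.ite_sq_re_trace_div_le {ρ M L : Matrix n n 𝕜} (hρ : ρ.PosSemidef)
    (hM : M.PosSemidef) (hL : L.IsHermitian) :
    (if (ρ * M).trace ≠ 0 then RCLike.re (M * L * ρ).trace ^ 2 / RCLike.re (ρ * M).trace else 0)
      ≤ RCLike.re (M * (L * ρ * L)).trace := by
  have hCS := hM.norm_trace_mul_mul_sq_le hρ L
  rw [hL.eq, trace_mul_comm M ρ] at hCS
  split_ifs with h0
  · have hpos : 0 < RCLike.re (ρ * M).trace :=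
      (RCLike.pos_iff.mp (lt_of_le_of_ne (hρ.trace_mul_nonneg hM) (Ne.symm h0))).1
    rw [div_le_iff₀ hpos]
    calc RCLike.re (M * L * ρ).trace ^ 2 ≤ ‖(M * L * ρ).trace‖ ^ 2 := by
          rw [← sq_abs]; gcongr; exact RCLike.abs_re_le_norm _
      _ ≤ _ := by simpa only [Matrix.mul_assoc, mul_comm] using hCS
  · simpa only [hL.eq] using
      (RCLike.nonneg_iff.mp (hM.trace_mul_nonneg (hρ.mul_mul_conjTranspose_same L))).1

variable {ι : Type*} [Fintype ι]

lemma re_trace_mul_sum_smul_mul (x : ι → ℝ) (A : Matrix n n 𝕜) (C : ι → Matrix n n 𝕜)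
    (B : Matrix n n 𝕜) :
    RCLike.re (A * (∑ j, x j • C j) * B).trace = ∑ j, x j * RCLike.re (A * C j * B).trace := by
  simp [Finset.sum_mul, Finset.mul_sum, trace_sum, trace_smul, RCLike.smul_re]

lemma re_trace_sum_smul_mul_sum_smul (x : ι → ℝ) (C : ι → Matrix n n 𝕜) (B : Matrix n n 𝕜) :
    RCLike.re ((∑ j, x j • C j) * B * ∑ k, x k • C k).trace
      = ∑ j, ∑ k, x j * x k * RCLike.re (C j * B * C k).trace := by
  simp only [Finset.sum_mul, Finset.mul_sum, Matrix.smul_mul, Matrix.mul_smul, trace_sum,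
    trace_smul, map_sum, RCLike.smul_re]
  rw [Finset.sum_comm]
  exact Finset.sum_congr rfl fun j _ => Finset.sum_congr rfl fun k _ => by ring

end Matrix

open Matrix

theorem braunstein_caves_general {d p : ℕ} {Ω : Type} [Fintype Ω]
    (ρ : Matrix (Fin d) (Fin d) ℂ) (hρ : ρ.PosSemidef)
    (D lam : Fin p → Matrix (Fin d) (Fin d) ℂ)
    (hlam : ∀ j, (lam j).IsHermitian)
    (hSLD : ∀ j, D j = (1 / 2 : ℂ) • (ρ * lam j + lam j * ρ))
    (M : Ω → Matrix (Fin d) (Fin d) ℂ)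
    (hM : ∀ m, (M m).PosSemidef) (hMsum : ∑ m, M m = 1)
    (F H : Fin p → Fin p → ℝ)
    (hF : ∀ j k, F j k = ∑ m, if (ρ * M m).trace ≠ 0 then
        ((D j * M m).trace.re * (D k * M m).trace.re) / ((ρ * M m).trace.re) else 0)
    (hH : ∀ j k, H j k = ((lam j * ρ * lam k).trace).re) :
    ∀ x : Fin p → ℝ, ∑ j, ∑ k, x j * x k * F j k ≤ ∑ j, ∑ k, x j * x k * H j k := by
  intro x
  set L := ∑ j, x j • lam j
  have hL : L.IsHermitian := isHermitian_sum_smul hlam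
  have hDM : ∀ m, ∑ j, x j * (D j * M m).trace.re = (M m * L * ρ).trace.re := fun m => by
    simp only [hSLD, ← RCLike.re_to_complex,
      hρ.isHermitian.re_trace_half_smul_add_mul (hlam _) (hM m).isHermitian]
    exact (re_trace_mul_sum_smul_mul x (M m) lam ρ).symm
  calc ∑ j, ∑ k, x j * x k * F j k
      = ∑ m, if (ρ * M m).trace ≠ 0 then
          (M m * L * ρ).trace.re ^ 2 / (ρ * M m).trace.re else 0 := by
        simp only [hF, Finset.sum_sum_mul_mul_sum_ite_div, hDM]
    _ ≤ ∑ m, (M m * (L * ρ * L)).trace.re :=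
        Finset.sum_le_sum fun m _ => hρ.ite_sq_re_trace_div_le (hM m) hL
    _ = (L * ρ * L).trace.re := by
        rw [← Complex.re_sum, ← trace_sum, ← Finset.sum_mul, hMsum, one_mul]
    _ = ∑ j, ∑ k, x j * x k * H j k := by
        simp only [hH]
        exact re_trace_sum_smul_mul_sum_smul x lam ρ

/-- **Multi-parameter Braunstein–Caves inequality.** -/
theorem braunstein_caves {d p : ℕ} {Ω : Type} [Fintype Ω]
    (ρ : Matrix (Fin d) (Fin d) ℂ) (hρ : ρ.PosSemidef) (hρtr : ρ.trace = 1)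
    (D lam : Fin p → Matrix (Fin d) (Fin d) ℂ)
    (hD : ∀ j, (D j).IsHermitian) (hlam : ∀ j, (lam j).IsHermitian)
    (hSLD : ∀ j, D j = (1 / 2 : ℂ) • (ρ * lam j + lam j * ρ))
    (M : Ω → Matrix (Fin d) (Fin d) ℂ)
    (hM : ∀ m, (M m).PosSemidef) (hMsum : ∑ m, M m = 1)
    (F H : Fin p → Fin p → ℝ)
    (hF : ∀ j k, F j k = ∑ m, if (ρ * M m).trace ≠ 0 then
        ((D j * M m).trace.re * (D k * M m).trace.re) / ((ρ * M m).trace.re) else 0)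
    (hH : ∀ j k, H j k = ((lam j * ρ * lam k).trace).re) :
    ∀ x : Fin p → ℝ, ∑ j, ∑ k, x j * x k * F j k ≤ ∑ j, ∑ k, x j * x k * H j k :=
  braunstein_caves_general ρ hρ D lam hlam hSLD M hM hMsum F H hF hH
end
end

section
/- Expression for the Sarovar–Milburn bound (Proposition): Let ψ₀ ∈ ℂ^d be a unit vector and ρ₀ = |ψ₀⟩⟨ψ₀|. Let Υ_1(θ),…,Υ_d(θ) be d×d complex matrices differentiable in θ ∈ ℝ (canonical Kraus operators), and suppose Υ_k(θ)ψ₀ = √(p_k(θ)) · w_k(θ) for every k and θ, where the data p_k, w_k are as in the spectral-family setup. Then 4 Σ_{k=1}^d tr( Υ_k'(θ) ρ₀ Υ_k'(θ)† ) = C_Υ(θ), where Υ_k' = dΥ_k/dθ and † denotes conjugate transpose. -/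
open scoped BigOperators Matrix

noncomputable section

/-!
Differentiating the Kraus relation `Υ_k ψ₀ = √p_k • w_k` gives `Υ_k' ψ₀ = (√p_k)' w_k + √p_k w_k'`,
where `√p_k = ⟨w_k, Υ_k ψ₀⟩` is differentiable. Since `⟨w_k, w_k⟩ = 1`, the cross term
`⟨w_k, w_k'⟩ + ⟨w_k', w_k⟩` vanishes, so `4‖Υ_k' ψ₀‖² = 4((√p_k)')² + 4 p_k ‖w_k'‖²`. Where
`p_k > 0`, `4((√p_k)')² = p_k'² / p_k`; at a zero of `p_k` the nonnegative function `√p_k` has a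
local minimum, so its derivative vanishes. Finally `‖w_k'‖² = Σ_j |⟨w_j, w_k'⟩|²` by Parseval, and
`|⟨w_j, w_k'⟩| = |⟨w_j', w_k⟩|` by differentiating `⟨w_j, w_k⟩ = δ_jk`; this symmetry turns
`Σ_k p_k Σ_j |⟨w_j', w_k⟩|²` into the pair sum and the diagonal sum of `C_Υ`.
-/

open Matrix ComplexConjugate

section Inn

variable {d : ℕ}

theorem inn_eq_star_dotProduct (x y : Fin d → ℂ) : inn x y = star x ⬝ᵥ y := rfl

theorem inn_swap (x y : Fin d → ℂ) : inn y x = conj (inn x y) := by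
  simp [inn, mul_comm]

theorem inn_smul_right (c : ℂ) (x y : Fin d → ℂ) : inn x (c • y) = c * inn x y := by
  simp [inn, Finset.mul_sum, mul_left_comm]

theorem inn_ofReal_smul_add_self (a b : ℝ) (x y : Fin d → ℂ) :
    inn ((a : ℂ) • x + (b : ℂ) • y) ((a : ℂ) • x + (b : ℂ) • y) =
      a ^ 2 * inn x x + a * b * (inn x y + inn y x) + b ^ 2 * inn y y := by
  simp only [inn, Pi.add_apply, Pi.smul_apply, smul_eq_mul, Finset.mul_sum,
    ← Finset.sum_add_distrib, map_add, map_mul, Complex.conj_ofReal]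
  exact Finset.sum_congr rfl fun i _ => by ring

theorem trace_mul_vecMulVec_star_mul_conjTranspose (A : Matrix (Fin d) (Fin d) ℂ)
    (ψ : Fin d → ℂ) : (A * vecMulVec ψ (star ψ) * Aᴴ).trace = inn (A *ᵥ ψ) (A *ᵥ ψ) := by
  rw [mul_vecMulVec, vecMulVec_mul, ← star_mulVec, trace_vecMulVec, dotProduct_comm,
    inn_eq_star_dotProduct]

theorem inn_self_eq_sum_norm_sq_of_orthonormal {e : Fin d → Fin d → ℂ}
    (he : ∀ j k, inn (e j) (e k) = if j = k then 1 else 0) (x : Fin d → ℂ) :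
    inn x x = ((∑ j, ‖inn (e j) x‖ ^ 2 : ℝ) : ℂ) := by
  set W : Matrix (Fin d) (Fin d) ℂ := Matrix.of fun i j => e j i
  have hWW : Wᴴ * W = 1 := by
    ext j k
    simpa [W, mul_apply, one_apply, inn] using he j k
  have hcoord : ∀ j, inn (e j) x = (Wᴴ *ᵥ x) j := fun j => rfl
  calc inn x x = star x ⬝ᵥ ((W * Wᴴ) *ᵥ x) := by rw [mul_eq_one_comm.1 hWW, one_mulVec]; rfl
    _ = star (Wᴴ *ᵥ x) ⬝ᵥ (Wᴴ *ᵥ x) := by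
        rw [star_mulVec, conjTranspose_conjTranspose, ← mulVec_mulVec, dotProduct_mulVec]
    _ = _ := by
        push_cast
        simp only [hcoord, dotProduct, Pi.star_apply, RCLike.star_def, Complex.conj_mul']

theorem HasDerivAt.inn {f g : ℝ → Fin d → ℂ} {f' g' : Fin d → ℂ} {θ : ℝ}
    (hf : HasDerivAt f f' θ) (hg : HasDerivAt g g' θ) :
    HasDerivAt (fun t => inn (f t) (g t)) (inn f' (g θ) + inn (f θ) g') θ := by
  have hfi := hasDerivAt_pi.1 hf
  have hgi := hasDerivAt_pi.1 hg
  have := HasDerivAt.fun_sum fun i (_ : i ∈ Finset.univ) =>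
    ((Complex.conjCLE.toContinuousLinearMap.hasFDerivAt).comp_hasDerivAt θ (hfi i)).mul (hgi i)
  simpa [_root_.inn, Finset.sum_add_distrib] using this

theorem inn_deriv_add_inn_deriv_eq_zero {f g : ℝ → Fin d → ℂ} {f' g' : Fin d → ℂ} {θ : ℝ}
    {c : ℂ} (hfg : ∀ t, inn (f t) (g t) = c) (hf : HasDerivAt f f' θ) (hg : HasDerivAt g g' θ) :
    inn f' (g θ) + inn (f θ) g' = 0 :=
  (hf.inn hg).unique <| by simpa only [hfg] using hasDerivAt_const θ c

end Inn

section Calculus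

variable {d : ℕ} {θ : ℝ}

theorem hasDerivAt_mulVec_const {m n : Type*} [Fintype n] {A : ℝ → Matrix m n ℂ}
    {A' : Matrix m n ℂ} (hA : ∀ i j, HasDerivAt (fun t => A t i j) (A' i j) θ) (x : n → ℂ) :
    HasDerivAt (fun t => A t *ᵥ x) (A' *ᵥ x) θ :=
  hasDerivAt_pi.2 fun i => by
    simpa [mulVec, dotProduct] using
      HasDerivAt.fun_sum fun j (_ : j ∈ Finset.univ) => (hA i j).mul_const (x j)

theorem exists_hasDerivAt_of_hasDerivAt_ofReal_smul {s : ℝ → ℝ} {w : ℝ → Fin d → ℂ}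
    {w' v : Fin d → ℂ} (hw : ∀ t, inn (w t) (w t) = 1) (hw' : HasDerivAt w w' θ)
    (hv : HasDerivAt (fun t => (s t : ℂ) • w t) v θ) : ∃ σ, HasDerivAt s σ θ := by
  have hs : HasDerivAt (fun t => (s t : ℂ)) (inn w' ((s θ : ℂ) • w θ) + inn (w θ) v) θ := by
    simpa only [inn_smul_right, hw, mul_one] using hw'.inn hv
  have hre := (Complex.reCLM.hasFDerivAt).comp_hasDerivAt θ hs
  exact ⟨_, by simpa [Function.comp_def] using hre⟩

theorem exists_inn_self_eq_of_hasDerivAt_ofReal_smul {s : ℝ → ℝ} {w : ℝ → Fin d → ℂ}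
    {w' v : Fin d → ℂ} (hw : ∀ t, inn (w t) (w t) = 1) (hw' : HasDerivAt w w' θ)
    (hv : HasDerivAt (fun t => (s t : ℂ) • w t) v θ) :
    ∃ σ, HasDerivAt s σ θ ∧ inn v v = (σ : ℂ) ^ 2 + (s θ : ℂ) ^ 2 * inn w' w' := by
  obtain ⟨σ, hσ⟩ := exists_hasDerivAt_of_hasDerivAt_ofReal_smul hw hw' hv
  have hv_eq : v = (s θ : ℂ) • w' + (σ : ℂ) • w θ := hv.unique (hσ.ofReal_comp.smul hw')
  have hskew := inn_deriv_add_inn_deriv_eq_zero hw hw' hw'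
  refine ⟨σ, hσ, ?_⟩
  rw [hv_eq, add_comm, inn_ofReal_smul_add_self, hw, add_comm (inn (w θ) w'), hskew]
  ring

theorem four_mul_sq_eq_of_hasDerivAt_sqrt {p : ℝ → ℝ} {p' σ : ℝ} (hp : ∀ t, 0 ≤ p t)
    (hp' : HasDerivAt p p' θ) (hσ : HasDerivAt (fun t => √(p t)) σ θ) :
    4 * σ ^ 2 = if 0 < p θ then p' ^ 2 / p θ else 0 := by
  split_ifs with hpos
  · have hsq : p' = 2 * √(p θ) * σ := by
      have hp_sq := hσ.fun_mul hσ
      simp only [Real.mul_self_sqrt (hp _)] at hp_sq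
      rw [hp'.unique hp_sq]
      ring
    rw [hsq, mul_pow, mul_pow, Real.sq_sqrt (hp θ)]
    field_simp
    ring
  · have hmin : IsLocalMin (fun t => √(p t)) θ := Filter.Eventually.of_forall fun t => by
      simp [Real.sqrt_eq_zero'.2 (not_lt.1 hpos)]
    simp [hmin.hasDerivAt_eq_zero hσ]

theorem four_mul_inn_self_eq_of_hasDerivAt_sqrt_smul {p : ℝ → ℝ} {p' : ℝ}
    {w : ℝ → Fin d → ℂ} {w' v : Fin d → ℂ} {e : Fin d → Fin d → ℂ}
    (he : ∀ j k, inn (e j) (e k) = if j = k then 1 else 0) (hp : ∀ t, 0 ≤ p t)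
    (hp' : HasDerivAt p p' θ) (hw : ∀ t, inn (w t) (w t) = 1) (hw' : HasDerivAt w w' θ)
    (hv : HasDerivAt (fun t => (√(p t) : ℂ) • w t) v θ) :
    4 * inn v v =
      (((if 0 < p θ then p' ^ 2 / p θ else 0) + 4 * p θ * ∑ j, ‖inn (e j) w'‖ ^ 2 : ℝ) : ℂ) := by
  obtain ⟨σ, hσ, hvv⟩ := exists_inn_self_eq_of_hasDerivAt_ofReal_smul hw hw' hv
  have hs : (√(p θ) : ℂ) ^ 2 = p θ := by exact_mod_cast Real.sq_sqrt (hp θ)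
  rw [hvv, hs, inn_self_eq_sum_norm_sq_of_orthonormal he,
    ← four_mul_sq_eq_of_hasDerivAt_sqrt hp hp' hσ]
  push_cast
  ring

end Calculus

section Sums

variable {ι : Type*} [Fintype ι] [LinearOrder ι]

theorem sum_sum_eq_sum_sum_lt_add_sum_diag {M : Type*} [AddCommMonoid M] (f : ι → ι → M) :
    ∑ j, ∑ k, f j k = ∑ j, ∑ k, (if j < k then f j k + f k j else 0) + ∑ k, f k k := by
  have hsplit : ∀ j k, f j k =
      (if j < k then f j k else 0) + (if k < j then f j k else 0) + if j = k then f j k else 0 := by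
    intro j k
    rcases lt_trichotomy j k with h | rfl | h
    · simp [h, h.ne, h.not_gt]
    · simp
    · simp [h, h.ne', h.not_gt]
  have hswap : ∑ j, ∑ k, (if k < j then f j k else 0) = ∑ j, ∑ k, if j < k then f k j else 0 :=
    Finset.sum_comm
  conv_lhs => enter [2, j, 2, k]; rw [hsplit j k]
  simp only [Finset.sum_add_distrib, hswap, Finset.sum_ite_eq, Finset.mem_univ, if_true,
    ite_add_zero]

theorem ite_pos_mul_eq_mul {a : ℝ} (ha : 0 ≤ a) (b : ℝ) : (if 0 < a then a * b else 0) = a * b := by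
  rcases ha.lt_or_eq with ha | rfl <;> simp [ha]

theorem sum_mul_sum_eq_sum_pairs_add_sum_diag {p : ι → ℝ} {q : ι → ι → ℝ} (hp : ∀ k, 0 ≤ p k)
    (hq : ∀ j k, q k j = q j k) :
    ∑ k, p k * ∑ j, q j k =
      ∑ j, ∑ k, (if j < k ∧ 0 < p j + p k then (p j + p k) * q j k else 0) +
        ∑ k, (if 0 < p k then p k * q k k else 0) := by
  simp only [ite_and, fun j k => ite_pos_mul_eq_mul (add_nonneg (hp j) (hp k)),
    fun k => ite_pos_mul_eq_mul (hp k), Finset.mul_sum]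
  rw [Finset.sum_comm, sum_sum_eq_sum_sum_lt_add_sum_diag]
  simp only [hq, add_mul, add_comm]

end Sums

theorem sarovar_milburn_bound_expression_general {d : ℕ}
    (p : Fin d → ℝ → ℝ) (w : Fin d → ℝ → (Fin d → ℂ))
    (p' : Fin d → ℝ → ℝ) (w' : Fin d → ℝ → (Fin d → ℂ))
    (horth : ∀ θ (j k : Fin d), inn (w j θ) (w k θ) = if j = k then 1 else 0)
    (hpnn : ∀ (k : Fin d) θ, 0 ≤ p k θ)
    (hp' : ∀ (k : Fin d) θ, HasDerivAt (p k) (p' k θ) θ)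
    (hw' : ∀ (k : Fin d) θ, HasDerivAt (w k) (w' k θ) θ)
    (ψ₀ : Fin d → ℂ)
    (Υ Υ' : Fin d → ℝ → Matrix (Fin d) (Fin d) ℂ)
    (hΥ' : ∀ (k : Fin d) θ (i j : Fin d), HasDerivAt (fun t => Υ k t i j) (Υ' k θ i j) θ)
    (hK : ∀ (k : Fin d) θ, (Υ k θ).mulVec ψ₀ = (Real.sqrt (p k θ) : ℂ) • w k θ) :
    ∀ θ : ℝ,
      4 * ∑ k, (Υ' k θ * Matrix.vecMulVec ψ₀ (star ψ₀) * (Υ' k θ)ᴴ).trace =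
        (((∑ k, if 0 < p k θ then (p' k θ) ^ 2 / p k θ else 0)
          + 4 * ∑ j, ∑ k, (if j < k ∧ 0 < p j θ + p k θ then
              (p j θ + p k θ) * ‖inn (w' j θ) (w k θ)‖ ^ 2 else 0)
          + 4 * ∑ k, (if 0 < p k θ then
              p k θ * ‖inn (w' k θ) (w k θ)‖ ^ 2 else 0) : ℝ) : ℂ) := by
  intro θ
  have hnorm : ∀ j k, ‖inn (w j θ) (w' k θ)‖ = ‖inn (w' j θ) (w k θ)‖ := fun j k => by
    rw [eq_neg_of_add_eq_zero_right
      (inn_deriv_add_inn_deriv_eq_zero (horth · j k) (hw' j θ) (hw' k θ)), norm_neg]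
  have hsymm : ∀ j k, ‖inn (w' k θ) (w j θ)‖ ^ 2 = ‖inn (w' j θ) (w k θ)‖ ^ 2 := fun j k => by
    rw [inn_swap, Complex.norm_conj, hnorm]
  have hbranch : ∀ k, 4 * (Υ' k θ * vecMulVec ψ₀ (star ψ₀) * (Υ' k θ)ᴴ).trace =
      (((if 0 < p k θ then p' k θ ^ 2 / p k θ else 0) +
        4 * p k θ * ∑ j, ‖inn (w' j θ) (w k θ)‖ ^ 2 : ℝ) : ℂ) := fun k => by
    have hv : HasDerivAt (fun t => (√(p k t) : ℂ) • w k t) (Υ' k θ *ᵥ ψ₀) θ := by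
      simpa only [hK] using hasDerivAt_mulVec_const (hΥ' k θ) ψ₀
    rw [trace_mul_vecMulVec_star_mul_conjTranspose, four_mul_inn_self_eq_of_hasDerivAt_sqrt_smul
      (horth θ) (hpnn k) (hp' k θ) (fun t => by simp [horth]) (hw' k θ) hv]
    simp only [hnorm]
  rw [Finset.mul_sum, Finset.sum_congr rfl fun k _ => hbranch k, ← Complex.ofReal_sum,
    Finset.sum_add_distrib, add_assoc, ← mul_add, ← sum_mul_sum_eq_sum_pairs_add_sum_diag (hpnn · θ) hsymm,
    Finset.mul_sum]
  simp only [mul_assoc]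

/-- **Expression for the Sarovar–Milburn bound.**  For a family of canonical Kraus
operators `Υ_k(θ)` with `Υ_k(θ)ψ₀ = √(p_k(θ)) w_k(θ)`, the quantity
`4 Σ_k tr(Υ_k'(θ) ρ₀ Υ_k'(θ)†)` equals `C_Υ(θ)`. -/
theorem sarovar_milburn_bound_expression {d : ℕ} (hd : 1 ≤ d)
    (p : Fin d → ℝ → ℝ) (w : Fin d → ℝ → (Fin d → ℂ))
    (p' : Fin d → ℝ → ℝ) (w' : Fin d → ℝ → (Fin d → ℂ))
    (horth : ∀ θ (j k : Fin d), inn (w j θ) (w k θ) = if j = k then 1 else 0)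
    (hpnn : ∀ (k : Fin d) θ, 0 ≤ p k θ) (hpsum : ∀ θ, ∑ k, p k θ = 1)
    (hp' : ∀ (k : Fin d) θ, HasDerivAt (p k) (p' k θ) θ)
    (hw' : ∀ (k : Fin d) θ, HasDerivAt (w k) (w' k θ) θ)
    (hdich : ∀ k : Fin d, (∀ θ, 0 < p k θ) ∨ (∀ θ, p k θ = 0))
    (ψ₀ : Fin d → ℂ) (hψ₀ : inn ψ₀ ψ₀ = 1)
    (Υ Υ' : Fin d → ℝ → Matrix (Fin d) (Fin d) ℂ)
    (hΥ' : ∀ (k : Fin d) θ (i j : Fin d), HasDerivAt (fun t => Υ k t i j) (Υ' k θ i j) θ)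
    (hK : ∀ (k : Fin d) θ, (Υ k θ).mulVec ψ₀ = (Real.sqrt (p k θ) : ℂ) • w k θ) :
    ∀ θ : ℝ,
      4 * ∑ k, (Υ' k θ * Matrix.vecMulVec ψ₀ (star ψ₀) * (Υ' k θ)ᴴ).trace =
        (((∑ k, if 0 < p k θ then (p' k θ) ^ 2 / p k θ else 0)
          + 4 * ∑ j, ∑ k, (if j < k ∧ 0 < p j θ + p k θ then
              (p j θ + p k θ) * ‖inn (w' j θ) (w k θ)‖ ^ 2 else 0)
          + 4 * ∑ k, (if 0 < p k θ then
              p k θ * ‖inn (w' k θ) (w k θ)‖ ^ 2 else 0) : ℝ) : ℂ) :=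
  sarovar_milburn_bound_expression_general p w p' w' horth hpnn hp' hw' ψ₀ Υ Υ' hΥ' hK
end
end

section
/- Real Gram matrices force complex linear independence (Lemma): Let x_1,…,x_n ∈ ℂ^d be vectors that are linearly independent over ℝ (viewing ℂ^d as a real vector space) and suppose ⟨x_j, x_k⟩ ∈ ℝ for all j,k ∈ {1,…,n}. Then x_1,…,x_n are linearly independent over ℂ; in particular n ≤ d. -/
/-!
The real span `W` of the `x j` carries a real-valued inner product. If `w` and `I • w` both lie
in `W`, then `⟪w, I • w⟫ = I * ‖w‖ ^ 2` is real, so `w = 0`. A complex relation `∑ g j • x j = 0`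
splits as `u + I • v = 0` with `u = ∑ (g j).re • x j` and `v = ∑ (g j).im • x j` in `W`; hence
`v = 0`, then `u = 0`, and real independence kills the real and imaginary parts of every `g j`.
-/

open scoped BigOperators

noncomputable section

open Submodule
open scoped InnerProductSpace

section InnerProductSpace

variable {E : Type*} [NormedAddCommGroup E] [InnerProductSpace ℂ E]

theorem im_inner_eq_zero_of_mem_span {S : Set E} (hS : ∀ u ∈ S, ∀ v ∈ S, (⟪u, v⟫_ℂ).im = 0)
    {u v : E} (hu : u ∈ span ℝ S) (hv : v ∈ span ℝ S) : (⟪u, v⟫_ℂ).im = 0 := by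
  induction hu using span_induction with
  | mem u hu =>
    induction hv using span_induction with
    | mem v hv => exact hS u hu v hv
    | zero => simp
    | add v w _ _ hv hw => simp [hv, hw]
    | smul r v _ hv => simp [← Complex.coe_smul, hv]
  | zero => simp
  | add u w _ _ hu hw => simp [hu, hw]
  | smul r u _ hu => simp [← Complex.coe_smul, hu]

theorem eq_zero_of_mem_of_I_smul_mem {W : Submodule ℝ E}
    (hW : ∀ u ∈ W, ∀ v ∈ W, (⟪u, v⟫_ℂ).im = 0) {w : E} (hw : w ∈ W)
    (hIw : Complex.I • w ∈ W) : w = 0 := by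
  have him : (⟪w, Complex.I • w⟫_ℂ).im = ‖w‖ ^ 2 := by
    rw [inner_smul_right, Complex.I_mul_im]
    exact inner_self_eq_norm_sq (𝕜 := ℂ) w
  rw [← norm_eq_zero]
  nlinarith [hW w hw _ hIw, him, norm_nonneg w]

theorem LinearIndependent.complex_of_real_of_im_inner_eq_zero {ι : Type*} {x : ι → E}
    (hR : LinearIndependent ℝ x) (hreal : ∀ j k, (⟪x j, x k⟫_ℂ).im = 0) :
    LinearIndependent ℂ x := by
  set W := span ℝ (Set.range x)
  have hW : ∀ u ∈ W, ∀ v ∈ W, (⟪u, v⟫_ℂ).im = 0 := fun u hu v hv =>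
    im_inner_eq_zero_of_mem_span (by rintro _ ⟨j, rfl⟩ _ ⟨k, rfl⟩; exact hreal j k) hu hv
  rw [linearIndependent_iff'] at hR ⊢
  intro s g hg i hi
  set u := ∑ j ∈ s, (g j).re • x j
  set v := ∑ j ∈ s, (g j).im • x j
  have hu : u ∈ W := sum_mem fun j _ => smul_mem _ _ (subset_span ⟨j, rfl⟩)
  have hv : v ∈ W := sum_mem fun j _ => smul_mem _ _ (subset_span ⟨j, rfl⟩)
  have huv : u + Complex.I • v = 0 := by
    rw [← hg, Finset.smul_sum, ← Finset.sum_add_distrib]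
    refine Finset.sum_congr rfl fun j _ => ?_
    rw [← Complex.coe_smul, ← Complex.coe_smul, smul_smul, ← add_smul, mul_comm,
      Complex.re_add_im]
  have hv0 : v = 0 := eq_zero_of_mem_of_I_smul_mem hW hv
    (by rw [eq_neg_of_add_eq_zero_right huv]; exact neg_mem hu)
  have hu0 : u = 0 := by simpa [hv0] using huv
  exact Complex.ext (hR s _ hu0 i hi) (hR s _ hv0 i hi)

end InnerProductSpace

theorem inn_eq_inner {d : ℕ} (x y : Fin d → ℂ) :
    inn x y = ⟪WithLp.toLp 2 x, WithLp.toLp 2 y⟫_ℂ := by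
  simp [inn, PiLp.inner_apply, mul_comm]

/-- **Real Gram matrices force complex linear independence.**
If `x_1, …, x_n ∈ ℂ^d` are `ℝ`-linearly independent and all their pairwise Hermitian
inner products are real, then they are `ℂ`-linearly independent; in particular `n ≤ d`. -/
theorem real_gram_complex_independent {d n : ℕ} (x : Fin n → (Fin d → ℂ))
    (hR : LinearIndependent ℝ x)
    (hreal : ∀ j k, (inn (x j) (x k)).im = 0) :
    LinearIndependent ℂ x ∧ n ≤ d := by
  have hR' : LinearIndependent ℝ (fun j => WithLp.toLp 2 (x j)) :=
    hR.map' (WithLp.linearEquiv 2 ℝ (Fin d → ℂ)).symm.toLinearMap (LinearEquiv.ker _)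
  have hC : LinearIndependent ℂ (fun j => WithLp.toLp 2 (x j)) :=
    hR'.complex_of_real_of_im_inner_eq_zero fun j k => by rw [← inn_eq_inner]; exact hreal j k
  refine ⟨hC.map' (WithLp.linearEquiv 2 ℂ (Fin d → ℂ)).toLinearMap (LinearEquiv.ker _), ?_⟩
  simpa using hC.fintype_card_le_finrank
end
end
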